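/- arXiv:0908.4126 — 4 statements merged into one kernel-verified Lean document; each statement's English description precedes it below -/
import Mathlib

section
/- Let X be a compact metric space and f: X → X continuous and conformal with continuous factor a: X → (0,∞). If the Lyapunov exponent λ(x) = lim_n (1/n) S_n log a(x) exists and is positive for a point x ∈ X, then x satisfies the tempered contraction condition: for every ε > 0, inf over n ∈ ℕ and 0 ≤ k ≤ n of { S_{n−k} log a(f^k x) + nε } > −∞. -/
open Filter Topology Metric Set
open scoped ENNReal NNReal

noncomputable section

namespace BowenNonuniform

variable {X : Type*}

/-- Birkhoff sum `S_n φ(x) = Σ_{k=0}^{n-1} φ(f^k x)`. -/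
def birkhoff (f : X → X) (φ : X → ℝ) (n : ℕ) (x : X) : ℝ :=
  ∑ k ∈ Finset.range n, φ (f^[k] x)

/-- `λ_n(x) = (1/n) S_n log a (x)`. -/
def lyapAvg (f : X → X) (a : X → ℝ) (n : ℕ) (x : X) : ℝ :=
  birkhoff f (fun y => Real.log (a y)) n x / n

/-- Tempered contraction: for every `ε > 0`,
`inf_{n, 0 ≤ k ≤ n} { S_{n-k} log a (f^k x) + n ε } > -∞`. -/
def TemperedContraction (f : X → X) (a : X → ℝ) (x : X) : Prop :=
  ∀ ε > 0, ∃ C : ℝ, ∀ n : ℕ, ∀ k ≤ n,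
    C ≤ birkhoff f (fun y => Real.log (a y)) (n - k) (f^[k] x) + n * ε

/-- Critical exponent of a one-parameter family of outer quantities. -/
def critExp (m : ℝ → ℝ≥0∞) : ℝ≥0∞ := ⨆ (d : ℝ≥0) (_ : m d = ⊤), (d : ℝ≥0∞)

section MetricDefs

variable [MetricSpace X]

/-- `f` is conformal with factor `a`: `a(x) = lim_{y→x} d(f x, f y)/d(x,y)`, `a` continuous. -/
def ConformalWith (f : X → X) (a : X → ℝ) : Prop :=
  Continuous a ∧ ∀ x : X,
    Tendsto (fun y => dist (f x) (f y) / dist x y) (𝓝[≠] x) (𝓝 (a x))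

/-- Bowen ball `B(x,n,δ)`. -/
def bowenBall (f : X → X) (x : X) (n : ℕ) (δ : ℝ) : Set X :=
  {y | ∀ k ≤ n, dist (f^[k] y) (f^[k] x) < δ}

/-- Countable covers of `Z` by Bowen balls of order at least `N`, centred in `Z`. -/
def pressureCovers (f : X → X) (Z : Set X) (N : ℕ) (δ : ℝ) : Set (Set (X × ℕ)) :=
  {E | E.Countable ∧ (∀ p ∈ E, p.1 ∈ Z ∧ N ≤ p.2) ∧ Z ⊆ ⋃ p ∈ E, bowenBall f p.1 p.2 δ}

/-- The pressure set function `m_P(Z,s,φ,N,δ)`. -/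
def mP (f : X → X) (φ : X → ℝ) (Z : Set X) (s : ℝ) (N : ℕ) (δ : ℝ) : ℝ≥0∞ :=
  ⨅ (E : Set (X × ℕ)) (_ : E ∈ pressureCovers f Z N δ),
    ∑' p : E, ENNReal.ofReal (Real.exp (-(p.1.2 : ℝ) * s + birkhoff f φ p.1.2 p.1.1))

/-- `m_P(Z,s,φ,δ) = lim_{N→∞} m_P(Z,s,φ,N,δ)` (increasing in `N`). -/
def mPd (f : X → X) (φ : X → ℝ) (Z : Set X) (s : ℝ) (δ : ℝ) : ℝ≥0∞ :=
  ⨆ N : ℕ, mP f φ Z s N δ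

/-- `P_Z(φ,δ)`: critical value of `s ↦ m_P(Z,s,φ,δ)`. -/
def presd (f : X → X) (φ : X → ℝ) (Z : Set X) (δ : ℝ) : ℝ :=
  sInf {s : ℝ | mPd f φ Z s δ = 0}

/-- The Carathéodory (Pesin–Pitskel') topological pressure `P_Z(φ) = lim_{δ→0} P_Z(φ,δ)`,
realised as a supremum since `δ ↦ P_Z(φ,δ)` is non-increasing in `δ`. -/
def pres (f : X → X) (φ : X → ℝ) (Z : Set X) : ℝ :=
  ⨆ δ : {d : ℝ // 0 < d}, presd f φ Z δ.1

/-- Countable covers of `Z` by metric balls centred in `Z` of radius in `(0,ε]`. -/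
def ballCovers (Z : Set X) (ε : ℝ) : Set (Set (X × ℝ)) :=
  {E | E.Countable ∧ (∀ p ∈ E, p.1 ∈ Z ∧ 0 < p.2 ∧ p.2 ≤ ε) ∧ Z ⊆ ⋃ p ∈ E, ball p.1 p.2}

/-- `m_H^b(Z,s,ε)`: ball covers weighted by `(diam B(x_i,r_i))^s`. -/
def mHb (Z : Set X) (s ε : ℝ) : ℝ≥0∞ :=
  ⨅ (E : Set (X × ℝ)) (_ : E ∈ ballCovers Z ε),
    ∑' p : E, ENNReal.ofReal (diam (ball p.1.1 p.1.2)) ^ s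

/-- `m_H^{b'}(Z,s,ε)`: ball covers weighted by `(2 r_i)^s`. -/
def mHb' (Z : Set X) (s ε : ℝ) : ℝ≥0∞ :=
  ⨅ (E : Set (X × ℝ)) (_ : E ∈ ballCovers Z ε),
    ∑' p : E, ENNReal.ofReal (2 * p.1.2) ^ s

/-- `m_H^b(Z,s) = lim_{ε→0} m_H^b(Z,s,ε)` (the quantity is non-increasing in `ε`). -/
def mHbLim (Z : Set X) (s : ℝ) : ℝ≥0∞ := ⨆ (ε : ℝ) (_ : 0 < ε), mHb Z s ε

def mHb'Lim (Z : Set X) (s : ℝ) : ℝ≥0∞ := ⨆ (ε : ℝ) (_ : 0 < ε), mHb' Z s ε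

/-- Countable open covers of `Z` of diameter at most `ε`. -/
def openCovers (Z : Set X) (ε : ℝ) : Set (Set (Set X)) :=
  {E | E.Countable ∧ (∀ U ∈ E, IsOpen U ∧ diam U ≤ ε) ∧ Z ⊆ ⋃₀ E}

/-- `m_H(Z,s,ε)`: open covers weighted by `(diam U_i)^s`. -/
def mH (Z : Set X) (s ε : ℝ) : ℝ≥0∞ :=
  ⨅ (E : Set (Set X)) (_ : E ∈ openCovers Z ε),
    ∑' U : E, ENNReal.ofReal (diam (U : Set X)) ^ s

/-- `m_H(Z,s) = lim_{ε→0} m_H(Z,s,ε)`. -/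
def mHLim (Z : Set X) (s : ℝ) : ℝ≥0∞ := ⨆ (ε : ℝ) (_ : 0 < ε), mH Z s ε

end MetricDefs

/-- The set `X(𝐔)` determined by a string `L` of open sets. -/
def stringSet (f : X → X) (L : List (Set X)) : Set X :=
  {x | ∀ j < L.length, f^[j] x ∈ L.getD j ∅}

/-- Countable covers of `Z` by strings over the cover `𝒰` of length at least `N`. -/
def stringCovers (f : X → X) (U : Finset (Set X)) (Z : Set X) (N : ℕ) :
    Set (Set (List (Set X))) :=
  {G | G.Countable ∧ (∀ L ∈ G, N ≤ L.length ∧ ∀ V ∈ L, V ∈ U) ∧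
       Z ⊆ ⋃ L ∈ G, stringSet f L}

/-- Pesin–Pitskel' set function `m_P'(Z,φ,𝒰,s,N)`. -/
def mPP (f : X → X) (φ : X → ℝ) (U : Finset (Set X)) (Z : Set X) (s : ℝ) (N : ℕ) : ℝ≥0∞ :=
  ⨅ (G : Set (List (Set X))) (_ : G ∈ stringCovers f U Z N),
    ∑' L : G, ENNReal.ofReal (Real.exp (-s * ((L : List (Set X)).length : ℝ) +
      sSup ((fun x => birkhoff f φ (L : List (Set X)).length x) ''
        stringSet f (L : List (Set X)))))

/-- Pesin–Pitskel' pressure `P'_Z(φ,𝒰)`: critical value of `s`. -/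
def presPP (f : X → X) (φ : X → ℝ) (U : Finset (Set X)) (Z : Set X) : ℝ :=
  sInf {s : ℝ | (⨆ N : ℕ, mPP f φ U Z s N) = 0}

open Classical in
/-- Distance on the full one-sided shift determined by `ψ`: `d(x,y) = ψ(x ∧ y)`,
where `x ∧ y` is the longest common prefix. -/
def shiftDist {k : ℕ} (ψ : List (Fin k) → ℝ) (x y : ℕ → Fin k) : ℝ :=
  if h : x = y then 0
  else ψ (List.ofFn (fun i : Fin (Nat.find (Function.ne_iff.mp h)) => x i))

/-- The word `x_1 … x_n` (prefix of length `n`). -/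
def prefixWord {k : ℕ} (x : ℕ → Fin k) (n : ℕ) : List (Fin k) :=
  List.ofFn (fun i : Fin n => x i)

/-- The one-sided shift map. -/
def shiftMap {k : ℕ} (x : ℕ → Fin k) : ℕ → Fin k := fun n => x (n + 1)

end BowenNonuniform

/- Along the orbit, `S_{n-k} log a (f^k x) = S_n x - S_k x` and `S_m x = mλ + o(m)`, so the
expression is at least `(n - k)λ - εn - O(1) ≥ -εn - O(1)` because `λ ≥ 0`. -/

namespace BowenNonuniform

variable {X : Type*}

theorem birkhoff_add (f : X → X) (φ : X → ℝ) (m n : ℕ) (x : X) :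
    birkhoff f φ (m + n) x = birkhoff f φ m x + birkhoff f φ n (f^[m] x) := by
  simp only [birkhoff, Finset.sum_range_add, ← Function.iterate_add_apply, add_comm]

theorem birkhoff_sub {f : X → X} {φ : X → ℝ} {k n : ℕ} (hk : k ≤ n) (x : X) :
    birkhoff f φ (n - k) (f^[k] x) = birkhoff f φ n x - birkhoff f φ k x := by
  rw [eq_sub_iff_add_eq', ← birkhoff_add, Nat.add_sub_cancel' hk]

end BowenNonuniform

theorem exists_abs_sub_mul_le_of_tendsto_div {u : ℕ → ℝ} {l δ : ℝ}
    (hu : Tendsto (fun n : ℕ => u n / n) atTop (𝓝 l)) (hδ : 0 < δ) :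
    ∃ B, ∀ n : ℕ, |u n - n * l| ≤ δ * n + B := by
  have hev : ∀ᶠ n : ℕ in atTop, |u n - n * l| - δ * n ≤ 0 := by
    filter_upwards [(Metric.tendsto_nhds.mp hu) δ hδ, eventually_gt_atTop 0] with n hn hpos
    have hn' : (0 : ℝ) < n := by exact_mod_cast hpos
    have : u n - n * l = n * (u n / n - l) := by field_simp
    rw [Real.dist_eq] at hn
    rw [this, abs_mul, Nat.abs_cast, sub_nonpos, mul_comm δ]
    exact mul_le_mul_of_nonneg_left hn.le hn'.le
  obtain ⟨B, hB⟩ := (isBoundedUnder_of_eventually_le hev).bddAbove_range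
  exact ⟨B, fun n => by linarith [hB ⟨n, rfl⟩]⟩

theorem exists_le_sub_add_mul_of_tendsto_div {u : ℕ → ℝ} {l ε : ℝ} (hl : 0 ≤ l)
    (hu : Tendsto (fun n : ℕ => u n / n) atTop (𝓝 l)) (hε : 0 < ε) :
    ∃ C, ∀ n : ℕ, ∀ k ≤ n, C ≤ u n - u k + n * ε := by
  obtain ⟨B, hB⟩ := exists_abs_sub_mul_le_of_tendsto_div hu (half_pos hε)
  refine ⟨-(2 * B), fun n k hk => ?_⟩
  have hkn : (k : ℝ) ≤ n := by exact_mod_cast hk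
  have hBn := abs_le.mp (hB n)
  have hBk := abs_le.mp (hB k)
  linarith [mul_le_mul_of_nonneg_right hkn hl, mul_le_mul_of_nonneg_left hkn hε.le]

open BowenNonuniform

theorem stmt6_general {X : Type*} (f : X → X) (a : X → ℝ)
    (x : X) (lam : ℝ) (hlam : 0 < lam)
    (hx : Tendsto (fun n : ℕ => lyapAvg f a n x) atTop (𝓝 lam)) :
    TemperedContraction f a x := by
  intro ε hε
  obtain ⟨C, hC⟩ := exists_le_sub_add_mul_of_tendsto_div hlam.le hx hε
  exact ⟨C, fun n k hk => by rw [birkhoff_sub hk]; exact hC n k hk⟩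

theorem stmt6 {X : Type*} [MetricSpace X] [CompactSpace X] (f : X → X) (a : X → ℝ)
    (hf : Continuous f) (hc : ConformalWith f a) (ha : ∀ x, 0 < a x)
    (x : X) (lam : ℝ) (hlam : 0 < lam)
    (hx : Tendsto (fun n : ℕ => lyapAvg f a n x) atTop (𝓝 lam)) :
    TemperedContraction f a x :=
  stmt6_general f a x lam hlam hx
end
end

section
/- (Bowen ball inclusion, upper bound) Let X be a compact metric space and f: X → X continuous and conformal with continuous factor a: X → (0,∞), in the sense that the map (x,y) ↦ log d(f(x),f(y)) − log d(x,y) extends continuously to the diagonal with value log a. Then for every ε > 0 there exists δ₀ > 0 such that for all x ∈ X, n ∈ ℕ, and 0 < δ < δ₀: B(x,n,δ) ⊆ B(x, δ·e^{−n(λ_n(x) − ε)}), where λ_n(x) = (1/n) S_n log a(x) and B(x,n,δ) = {y : d(f^k y, f^k x) < δ for 0 ≤ k ≤ n}. -/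
open Filter Topology Metric Set
open scoped ENNReal NNReal

noncomputable section

open BowenNonuniform

theorem stmt8 {X : Type*} [MetricSpace X] [CompactSpace X] (f : X → X) (a : X → ℝ)
    (ζ : X × X → ℝ) (hf : Continuous f) (ha : Continuous a) (hapos : ∀ x, 0 < a x)
    (hζ : Continuous ζ)
    (hoff : ∀ x y : X, x ≠ y → ζ (x, y) = Real.log (dist (f x) (f y)) - Real.log (dist x y))
    (hdiag : ∀ x : X, ζ (x, x) = Real.log (a x)) :
    ∀ ε > 0, ∃ δ₀ > 0, ∀ (x : X) (n : ℕ) (δ : ℝ), 0 < δ → δ < δ₀ →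
      bowenBall f x n δ ⊆
        ball x (δ * Real.exp (-((n : ℝ) * (lyapAvg f a n x - ε)))) := by
  intro ε hε
  -- boundedness of ζ
  obtain ⟨M, hM⟩ : ∃ M, ∀ p : X × X, ‖ζ p‖ ≤ M := by
    obtain ⟨M, hM⟩ := (isCompact_univ (X := X × X)).exists_bound_of_continuousOn
      hζ.continuousOn
    exact ⟨M, fun p => hM p (mem_univ p)⟩
  -- uniform continuity of the defect function
  have hgc : Continuous (fun p : X × X => ζ p - Real.log (a p.1)) :=
    hζ.sub ((ha.comp continuous_fst).log (fun p => (hapos p.1).ne'))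
  obtain ⟨δ₁, hδ₁, hδ₁'⟩ := Metric.uniformContinuous_iff.mp (CompactSpace.uniformContinuous_of_continuous hgc) ε hε
  refine ⟨min δ₁ (Real.exp (-M)), lt_min hδ₁ (Real.exp_pos _), ?_⟩
  intro x n δ hδ hδ₀ y hy
  rcases eq_or_ne y x with rfl | hxy
  · exact mem_ball_self (by positivity)
  -- key pointwise estimate
  have key : ∀ u v : X, u ≠ v → dist u v < min δ₁ (Real.exp (-M)) →
      f u ≠ f v ∧
        Real.log (dist u v) ≤ Real.log (dist (f u) (f v)) - Real.log (a u) + ε := by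
    intro u v huv hd
    have hdpos : 0 < dist u v := dist_pos.mpr huv
    have hζuv : |ζ (u, v) - Real.log (a u)| < ε := by
      have h1 : dist ((u, v) : X × X) (u, u) < δ₁ := by
        rw [Prod.dist_eq]
        simp only [dist_self]
        have h : dist v u < δ₁ := lt_of_lt_of_le (by rwa [dist_comm]) (min_le_left _ _)
        exact max_lt hδ₁ h
      have h2 := hδ₁' h1
      rw [Real.dist_eq] at h2
      simpa [hdiag u] using h2
    have hfne : f u ≠ f v := by
      intro hfe
      have h0 : ζ (u, v) = - Real.log (dist u v) := by
        rw [hoff u v huv, hfe, dist_self, Real.log_zero]; ring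
      have hb := hM (u, v)
      rw [h0, Real.norm_eq_abs] at hb
      have h2 : -Real.log (dist u v) ≤ M := (abs_le.mp hb).2
      have h3 : Real.exp (-M) ≤ dist u v := by
        calc Real.exp (-M) ≤ Real.exp (Real.log (dist u v)) :=
              Real.exp_le_exp.mpr (by linarith)
          _ = dist u v := Real.exp_log hdpos
      exact absurd (lt_of_lt_of_le hd (min_le_right _ _)) (not_lt.mpr h3)
    refine ⟨hfne, ?_⟩
    rw [hoff u v huv] at hζuv
    have := (abs_lt.mp hζuv).1
    linarith
  -- all iterates stay distinct
  have hne : ∀ k, k ≤ n → f^[k] x ≠ f^[k] y := by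
    intro k
    induction k with
    | zero => intro _; simpa using hxy.symm
    | succ k ih =>
      intro hk
      have hk' := Nat.le_of_succ_le hk
      have hd : dist (f^[k] x) (f^[k] y) < min δ₁ (Real.exp (-M)) := by
        have h := hy k hk'
        rw [dist_comm] at h
        exact h.trans hδ₀
      have h := (key _ _ (ih hk') hd).1
      simpa [Function.iterate_succ_apply'] using h
  -- main telescoping estimate
  have main : ∀ k, k ≤ n → Real.log (dist x y) ≤
      Real.log (dist (f^[k] x) (f^[k] y)) -
        birkhoff f (fun z => Real.log (a z)) k x + k * ε := by
    intro k
    induction k with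
    | zero => intro _; simp [birkhoff]
    | succ k ih =>
      intro hk
      have hk' := Nat.le_of_succ_le hk
      have h1 := ih hk'
      have hd : dist (f^[k] x) (f^[k] y) < min δ₁ (Real.exp (-M)) := by
        have h := hy k hk'
        rw [dist_comm] at h
        exact h.trans hδ₀
      have h2 := (key _ _ (hne k hk') hd).2
      have h3 : dist (f (f^[k] x)) (f (f^[k] y)) = dist (f^[k+1] x) (f^[k+1] y) := by
        simp [Function.iterate_succ_apply']
      rw [h3] at h2
      have hb : birkhoff f (fun z => Real.log (a z)) (k+1) x =
          birkhoff f (fun z => Real.log (a z)) k x + Real.log (a (f^[k] x)) := by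
        simp [birkhoff, Finset.sum_range_succ]
      rw [hb]
      push_cast
      linarith
  have hfin := main n le_rfl
  have hdyn : dist (f^[n] x) (f^[n] y) < δ := by
    have h := hy n le_rfl; rwa [dist_comm] at h
  have hposn : 0 < dist (f^[n] x) (f^[n] y) := dist_pos.mpr (hne n le_rfl)
  have hlog : Real.log (dist (f^[n] x) (f^[n] y)) < Real.log δ :=
    Real.log_lt_log hposn hdyn
  have hxy' : 0 < dist x y := dist_pos.mpr (Ne.symm hxy)
  have hlt : Real.log (dist x y) <
      Real.log δ - birkhoff f (fun z => Real.log (a z)) n x + n * ε := by linarith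
  have hexp : (n : ℝ) * (lyapAvg f a n x - ε) =
      birkhoff f (fun z => Real.log (a z)) n x - n * ε := by
    rcases Nat.eq_zero_or_pos n with rfl | hn
    · simp [lyapAvg, birkhoff]
    · have hn' : (n : ℝ) ≠ 0 := Nat.cast_ne_zero.mpr hn.ne'
      rw [lyapAvg]
      field_simp
  rw [mem_ball, dist_comm, hexp]
  calc dist x y = Real.exp (Real.log (dist x y)) := (Real.exp_log hxy').symm
    _ < Real.exp (Real.log δ - birkhoff f (fun z => Real.log (a z)) n x + n * ε) :=
        Real.exp_lt_exp.mpr hlt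
    _ = δ * Real.exp (-(birkhoff f (fun z => Real.log (a z)) n x - n * ε)) := by
        rw [show Real.log δ - birkhoff f (fun z => Real.log (a z)) n x + n * ε =
          Real.log δ + -(birkhoff f (fun z => Real.log (a z)) n x - n * ε) by ring,
          Real.exp_add, Real.exp_log hδ]
end
end

section
/- (Bowen ball inclusion, lower bound) Let X, f, a be as in the previous statement, and let x ∈ X satisfy the tempered contraction condition (for every ε > 0, inf_{n ∈ ℕ, 0 ≤ k ≤ n} { S_{n−k} log a(f^k x) + nε } > −∞). Then for every ε > 0 there exist δ₀ > 0 (independent of x) and η = η(x,ε) > 0 such that for every n ∈ ℕ and 0 < δ < δ₀: B(x, ηδ·e^{−n(λ_n(x)+ε)}) ⊆ B(x,n,δ). -/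
open Filter Topology Metric Set
open scoped ENNReal NNReal

noncomputable section

open BowenNonuniform

theorem stmt9 {X : Type*} [MetricSpace X] [CompactSpace X] (f : X → X) (a : X → ℝ)
    (ζ : X × X → ℝ) (hf : Continuous f) (ha : Continuous a) (hapos : ∀ x, 0 < a x)
    (hζ : Continuous ζ)
    (hoff : ∀ x y : X, x ≠ y → ζ (x, y) = Real.log (dist (f x) (f y)) - Real.log (dist x y))
    (hdiag : ∀ x : X, ζ (x, x) = Real.log (a x)) :
    ∀ ε > 0, ∃ δ₀ > 0, ∀ x : X, TemperedContraction f a x →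
      ∃ η > 0, ∀ (n : ℕ) (δ : ℝ), 0 < δ → δ < δ₀ →
        ball x (η * δ * Real.exp (-((n : ℝ) * (lyapAvg f a n x + ε)))) ⊆
          bowenBall f x n δ := by
  intro ε hε
  obtain ⟨δ₀, hδ₀, hζδ⟩ := Metric.uniformContinuous_iff.mp
    (CompactSpace.uniformContinuous_of_continuous hζ) (ε / 2) (by linarith)
  refine ⟨δ₀, hδ₀, ?_⟩
  intro x htemp
  obtain ⟨C, hC⟩ := htemp (ε / 2) (by linarith)
  refine ⟨Real.exp C, Real.exp_pos C, ?_⟩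
  intro n δ hδ hδδ₀ y hy
  simp only [mem_ball] at hy
  -- conformal estimate
  have key : ∀ u v : X, dist u v < δ₀ →
      dist (f u) (f v) ≤ dist u v * Real.exp (Real.log (a u) + ε / 2) := by
    intro u v huv
    rcases eq_or_ne u v with rfl | hne
    · simp
    · have hd : (0 : ℝ) < dist u v := dist_pos.mpr hne
      have hdist : dist ((u, v) : X × X) (u, u) < δ₀ := by
        rw [Prod.dist_eq]
        simp only [dist_self, dist_comm v u]
        exact max_lt hδ₀ huv
      have h := hζδ hdist
      rw [Real.dist_eq] at h
      have hle : ζ (u, v) ≤ ζ (u, u) + ε / 2 := by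
        have h' := abs_lt.mp h
        linarith [h'.1, h'.2]
      rw [hoff u v hne, hdiag u] at hle
      rcases eq_or_lt_of_le (dist_nonneg : (0 : ℝ) ≤ dist (f u) (f v)) with h0 | hpos
      · rw [← h0]; positivity
      · have heq : dist (f u) (f v) = Real.exp (Real.log (dist (f u) (f v))) :=
          (Real.exp_log hpos).symm
        rw [heq]
        calc Real.exp (Real.log (dist (f u) (f v)))
            ≤ Real.exp (Real.log (dist u v) + (Real.log (a u) + ε / 2)) :=
              Real.exp_le_exp.mpr (by linarith)
          _ = dist u v * Real.exp (Real.log (a u) + ε / 2) := by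
              rw [Real.exp_add, Real.exp_log hd]
  set S : ℕ → X → ℝ := fun m z => birkhoff f (fun y => Real.log (a y)) m z with hS
  have hadd : ∀ (m l : ℕ) (z : X), S (m + l) z = S m z + S l (f^[m] z) := by
    intro m l z
    simp only [hS, birkhoff]
    rw [Finset.sum_range_add]
    congr 1
    refine Finset.sum_congr rfl fun j _ => ?_
    rw [← Function.iterate_add_apply, Nat.add_comm j m]
  have hsplit : ∀ k ≤ n, S n x = S k x + S (n - k) (f^[k] x) := by
    intro k hk
    have := hadd k (n - k) x
    rwa [Nat.add_sub_cancel' hk] at this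
  have hnL : (n : ℝ) * lyapAvg f a n x = S n x := by
    rcases Nat.eq_zero_or_pos n with rfl | hn
    · simp [hS, lyapAvg, birkhoff]
    · have hne : (n : ℝ) ≠ 0 := Nat.cast_ne_zero.mpr hn.ne'
      simp only [lyapAvg, hS]
      field_simp
  have hbound : ∀ k ≤ n, S k x + (k : ℝ) * (ε / 2) ≤
      (n : ℝ) * (lyapAvg f a n x + ε) - C := by
    intro k hk
    have h1 := hC n k hk
    have h2 := hsplit k hk
    have h3 : (k : ℝ) ≤ (n : ℝ) := Nat.cast_le.mpr hk
    have h4 : (n : ℝ) * (lyapAvg f a n x + ε) = S n x + n * ε := by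
      rw [mul_add, hnL]
    have h5 : (k : ℝ) * (ε / 2) ≤ (n : ℝ) * (ε / 2) :=
      mul_le_mul_of_nonneg_right h3 (by linarith)
    simp only [hS] at h1 h2 ⊢
    linarith
  have hmain : ∀ k ≤ n, dist y x * Real.exp (S k x + (k : ℝ) * (ε / 2)) < δ := by
    intro k hk
    set A := (n : ℝ) * (lyapAvg f a n x + ε) with hA
    have h1 : Real.exp (S k x + (k : ℝ) * (ε / 2)) ≤ Real.exp (A - C) :=
      Real.exp_le_exp.mpr (hbound k hk)
    calc dist y x * Real.exp (S k x + (k : ℝ) * (ε / 2))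
        ≤ dist y x * Real.exp (A - C) := mul_le_mul_of_nonneg_left h1 dist_nonneg
      _ < Real.exp C * δ * Real.exp (-A) * Real.exp (A - C) :=
          mul_lt_mul_of_pos_right hy (Real.exp_pos _)
      _ = δ * Real.exp (C + -A + (A - C)) := by
          rw [Real.exp_add, Real.exp_add]; ring
      _ = δ := by
          have : C + -A + (A - C) = 0 := by ring
          rw [this, Real.exp_zero, mul_one]
  have hind : ∀ k, k ≤ n →
      dist (f^[k] y) (f^[k] x) ≤ dist y x * Real.exp (S k x + (k : ℝ) * (ε / 2)) := by
    intro k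
    induction k with
    | zero => intro _; simp [hS, birkhoff]
    | succ k ih =>
      intro hk
      have hk' := Nat.le_of_succ_le hk
      have h1 := ih hk'
      have h2 : dist (f^[k] y) (f^[k] x) < δ₀ :=
        lt_of_le_of_lt h1 (lt_trans (hmain k hk') hδδ₀)
      calc dist (f^[k + 1] y) (f^[k + 1] x)
          = dist (f (f^[k] y)) (f (f^[k] x)) := by
            rw [Function.iterate_succ_apply', Function.iterate_succ_apply']
        _ ≤ dist (f^[k] y) (f^[k] x) * Real.exp (Real.log (a (f^[k] x)) + ε / 2) := by
            have hkey := key (f^[k] x) (f^[k] y) (by rwa [dist_comm])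
            rwa [dist_comm (f (f^[k] x)), dist_comm (f^[k] x)] at hkey
        _ ≤ dist y x * Real.exp (S k x + (k : ℝ) * (ε / 2)) *
              Real.exp (Real.log (a (f^[k] x)) + ε / 2) :=
            mul_le_mul_of_nonneg_right h1 (Real.exp_pos _).le
        _ = dist y x * Real.exp (S (k + 1) x + ((k : ℝ) + 1) * (ε / 2)) := by
            rw [mul_assoc, ← Real.exp_add]
            have hSk : S (k + 1) x = S k x + Real.log (a (f^[k] x)) :=
              Finset.sum_range_succ _ _
            rw [hSk]
            ring_nf
        _ = dist y x * Real.exp (S (k + 1) x + ((k + 1 : ℕ) : ℝ) * (ε / 2)) := by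
            push_cast; ring_nf
  intro k hk
  exact lt_of_le_of_lt (hind k hk) (hmain k hk)
end
end

section
/- Let X = Σ_k^+ with metric d(x,y) = θ^{−n} where θ > 1 and n is the length of the longest common prefix of x and y. Then for every subset Z ⊆ X, dim_H Z = h_top(Z)/log θ, where h_top(Z) is the Bowen topological entropy of the shift on Z. -/
open Filter Topology Metric Set
open scoped ENNReal NNReal

noncomputable section

open BowenNonuniform

/-!
With the metric `θ ^ (-|x ∧ y|)` on the full shift, the Bowen ball `B(x, n, δ)` contains the
closed ball of radius `θ ^ (-(n + c))`, where `c` depends only on `δ`, and for `δ ≤ 1` it has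
diameter at most `θ ^ (-n)`. Hence for `s = t log θ` the weight `e^{-ns} = (θ ^ (-n)) ^ t` of a
Bowen ball of order `n` is, up to a constant factor, the `t`-th power of its diameter. A cover of
`Z` by Bowen balls is a cover by sets of small diameter; conversely a set of diameter about
`θ ^ (-l)` meeting `Z` lies in a Bowen ball of order `l - c` centred in `Z`. So
`m_P(Z, t log θ, δ)` vanishes exactly when `μH[t] Z` does, and the critical values agree:
`P_Z(0) = log θ · dim_H Z`. The bound `dim_H ≤ log k / log θ`, from the `k ^ n` cylinders of
length `n`, keeps these critical values away from the junk value `sInf ∅ = 0`. Nothing else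
about the shift is used.
-/

namespace BowenNonuniform

open MeasureTheory

lemma tendsto_rpow_neg_natCast {θ : ℝ} (hθ : 1 < θ) :
    Tendsto (fun n : ℕ => θ ^ (-(n : ℝ))) atTop (𝓝 0) :=
  (tendsto_rpow_atBot_of_base_gt_one θ hθ).comp
    (tendsto_neg_atTop_atBot.comp tendsto_natCast_atTop_atTop)

lemma tendsto_ofReal_rpow_neg_natCast {θ : ℝ} (hθ : 1 < θ) :
    Tendsto (fun n : ℕ => ENNReal.ofReal (θ ^ (-(n : ℝ)))) atTop (𝓝 0) := by
  simpa using ENNReal.tendsto_ofReal (tendsto_rpow_neg_natCast hθ)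

lemma rpow_neg_natCast_sub {θ : ℝ} (hθ : 0 < θ) {l c : ℕ} (h : c ≤ l) :
    θ ^ (-((l - c : ℕ) : ℝ)) = θ ^ (c : ℝ) * θ ^ (-(l : ℝ)) := by
  rw [Nat.cast_sub h, ← Real.rpow_add hθ]
  ring_nf

lemma ofReal_exp_neg_mul_mul_log {θ : ℝ} (hθ : 0 < θ) (n t : ℝ) :
    ENNReal.ofReal (Real.exp (-n * (t * Real.log θ))) = ENNReal.ofReal (θ ^ (-n)) ^ t := by
  rw [ENNReal.ofReal_rpow_of_pos (Real.rpow_pos_of_pos hθ _), ← Real.rpow_mul hθ.le,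
    Real.rpow_def_of_pos hθ]
  ring_nf

lemma ofReal_rpow_neg_natCast_rpow_logb {θ : ℝ} (hθ : 1 < θ) {K : ℕ} (hK : 0 < K) (n : ℕ) :
    ENNReal.ofReal (θ ^ (-(n : ℝ))) ^ Real.logb θ K = ((K : ℝ≥0∞) ^ n)⁻¹ := by
  have hθ0 : 0 < θ := by linarith
  rw [ENNReal.ofReal_rpow_of_pos (Real.rpow_pos_of_pos hθ0 _), ← Real.rpow_mul hθ0.le,
    mul_comm, Real.rpow_mul hθ0.le, Real.rpow_logb hθ0 hθ.ne' (by exact_mod_cast hK),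
    Real.rpow_neg (Nat.cast_nonneg K), Real.rpow_natCast,
    ENNReal.ofReal_inv_of_pos (by positivity), ENNReal.ofReal_pow (Nat.cast_nonneg K),
    ENNReal.ofReal_natCast]

lemma dimH_le_logb_of_covers {X : Type*} [EMetricSpace X] {θ : ℝ} (hθ : 1 < θ) {K : ℕ}
    (hK : 0 < K) {ι : ℕ → Type*} [∀ n, Fintype (ι n)] (hcard : ∀ n, Fintype.card (ι n) ≤ K ^ n)
    (U : ∀ n, ι n → Set X) (hdiam : ∀ n i, ediam (U n i) ≤ ENNReal.ofReal (θ ^ (-(n : ℝ))))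
    {s : Set X} (hs : ∀ n, s ⊆ ⋃ i, U n i) :
    dimH s ≤ ENNReal.ofReal (Real.logb θ K) := by
  borelize X
  have ht : 0 ≤ Real.logb θ K := Real.logb_nonneg hθ (by exact_mod_cast hK)
  have hsum_le_one : ∀ n, ∑ i, ediam (U n i) ^ Real.logb θ K ≤ 1 := fun n =>
    calc ∑ i, ediam (U n i) ^ Real.logb θ K
        ≤ ∑ _i : ι n, ENNReal.ofReal (θ ^ (-(n : ℝ))) ^ Real.logb θ K :=
          Finset.sum_le_sum fun i _ => ENNReal.rpow_le_rpow (hdiam n i) ht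
      _ = Fintype.card (ι n) * ((K : ℝ≥0∞) ^ n)⁻¹ := by
          rw [Finset.sum_const, nsmul_eq_mul, ofReal_rpow_neg_natCast_rpow_logb hθ hK,
            Finset.card_univ]
      _ ≤ (K : ℝ≥0∞) ^ n * ((K : ℝ≥0∞) ^ n)⁻¹ := by gcongr; exact_mod_cast hcard n
      _ ≤ 1 := ENNReal.mul_inv_le_one _
  have hμ : μH[Real.logb θ K] s ≤ 1 :=
    (Measure.hausdorffMeasure_le_liminf_sum _ s _
      (tendsto_ofReal_rpow_neg_natCast hθ) U (.of_forall hdiam) (.of_forall hs)).trans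
      ((liminf_le_liminf (.of_forall hsum_le_one)).trans (liminf_const 1).le)
  exact dimH_le_of_hausdorffMeasure_ne_top (d := (Real.logb θ K).toNNReal)
    (by rw [Real.coe_toNNReal _ ht]; exact (hμ.trans_lt ENNReal.one_lt_top).ne)

lemma birkhoff_zero {X : Type*} (f : X → X) (n : ℕ) (x : X) :
    birkhoff f (fun _ => 0) n x = 0 := by
  simp [birkhoff]

section Pressure

variable {X : Type*} [MetricSpace X]

lemma exists_subset_closedBall_of_ediam_le {θ : ℝ} (hθ : 1 < θ) {C : Set X} {x : X} (hx : x ∈ C)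
    {L : ℕ} (hC : ediam C ≤ ENNReal.ofReal (θ ^ (-(L : ℝ)))) {t : ℝ} (ht : 0 < t)
    {η : ℝ≥0∞} (hη : η ≠ 0) :
    ∃ l, L ≤ l ∧ C ⊆ closedBall x (θ ^ (-(l : ℝ))) ∧
      ENNReal.ofReal (θ ^ (-(l : ℝ))) ^ t ≤ ENNReal.ofReal θ ^ t * (ediam C ^ t + η) := by
  have hθ0 : 0 < θ := by linarith
  have hlim : Tendsto (fun M : ℕ => ENNReal.ofReal (θ ^ (-(M : ℝ))) ^ t) atTop (𝓝 0) := by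
    have := ((ENNReal.continuous_rpow_const (y := t)).tendsto 0).comp
      (tendsto_ofReal_rpow_neg_natCast hθ)
    rwa [ENNReal.zero_rpow_of_pos ht] at this
  obtain ⟨M, hM, hLM⟩ :=
    ((hlim.eventually (ge_mem_nhds (pos_iff_ne_zero.mpr hη))).and (eventually_ge_atTop L)).exists
  -- `l` is the finest scale `≤ M` above `ediam C`: unless `l = M`, the scale `l + 1` is below it
  set P := fun l : ℕ => ediam C ≤ ENNReal.ofReal (θ ^ (-(l : ℝ)))
  set l := Nat.findGreatest P M
  have hCl : ediam C ≤ ENNReal.ofReal (θ ^ (-(l : ℝ))) := Nat.findGreatest_spec (P := P) hLM hC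
  refine ⟨l, Nat.le_findGreatest (P := P) hLM hC, fun y hy => ?_, ?_⟩
  · rw [mem_closedBall, ← edist_le_ofReal (by positivity)]
    exact (edist_le_ediam_of_mem hy hx).trans hCl
  have hη_le : η ≤ ENNReal.ofReal θ ^ t * (ediam C ^ t + η) :=
    le_mul_of_one_le_of_le (ENNReal.one_le_rpow (by simpa using hθ.le) ht) le_add_self
  rcases (Nat.findGreatest_le (P := P) M).lt_or_eq with hlt | heq
  · have hnext : ENNReal.ofReal (θ ^ (-((l + 1 : ℕ) : ℝ))) < ediam C :=
      not_le.mp (Nat.findGreatest_is_greatest (P := P) (Nat.lt_succ_self l) hlt)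
    have hscale : θ ^ (-(l : ℝ)) = θ * θ ^ (-((l + 1 : ℕ) : ℝ)) := by
      rw [Nat.cast_succ, neg_add, Real.rpow_add hθ0, Real.rpow_neg_one]
      field_simp
    calc ENNReal.ofReal (θ ^ (-(l : ℝ))) ^ t
        = (ENNReal.ofReal θ * ENNReal.ofReal (θ ^ (-((l + 1 : ℕ) : ℝ)))) ^ t := by
          rw [hscale, ENNReal.ofReal_mul hθ0.le]
      _ ≤ (ENNReal.ofReal θ * ediam C) ^ t := by gcongr
      _ = ENNReal.ofReal θ ^ t * ediam C ^ t := ENNReal.mul_rpow_of_nonneg _ _ ht.le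
      _ ≤ ENNReal.ofReal θ ^ t * (ediam C ^ t + η) := by gcongr; exact le_self_add
  · rw [show l = M from heq]
    exact hM.trans hη_le

lemma exists_cover_of_hausdorffMeasure_eq_zero [MeasurableSpace X] [BorelSpace X] {t : ℝ}
    (ht : 0 < t) {Z : Set X} (h : μH[t] Z = 0) {r ε : ℝ≥0∞} (hr : 0 < r) (hε : 0 < ε) :
    ∃ C : ℕ → Set X, Z ⊆ ⋃ n, C n ∧ (∀ n, ediam (C n) ≤ r) ∧ ∑' n, ediam (C n) ^ t < ε := by
  rw [Measure.hausdorffMeasure_apply] at h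
  have hinf := ((le_iSup₂ (f := fun (r : ℝ≥0∞) (_ : 0 < r) =>
    ⨅ (C : ℕ → Set X) (_ : Z ⊆ ⋃ n, C n) (_ : ∀ n, ediam (C n) ≤ r),
      ∑' n, ⨆ _ : (C n).Nonempty, ediam (C n) ^ t) r hr).trans h.le).trans_lt hε
  simp only [iInf_lt_iff] at hinf
  obtain ⟨C, hZC, hCr, hsum⟩ := hinf
  refine ⟨C, hZC, hCr, lt_of_le_of_lt (ENNReal.tsum_le_tsum fun n => ?_) hsum⟩
  rcases (C n).eq_empty_or_nonempty with hC | hC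
  · simp [hC, ENNReal.zero_rpow_of_pos ht]
  · exact le_iSup_of_le hC le_rfl

variable (F : X → X)

lemma mP_empty (φ : X → ℝ) (s : ℝ) (N : ℕ) (δ : ℝ) : mP F φ ∅ s N δ = 0 :=
  le_antisymm ((iInf₂_le ∅ ⟨countable_empty, by simp, empty_subset _⟩).trans (by simp)) bot_le

lemma pres_empty (φ : X → ℝ) : pres F φ ∅ = 0 := by
  have hpresd : ∀ δ, presd F φ ∅ δ = 0 := fun δ => by
    rw [presd, eq_univ_of_forall (s := {s | mPd F φ ∅ s δ = 0}) fun s => by simp [mPd, mP_empty],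
      Real.sInf_univ]
  simp [pres, hpresd]

lemma one_le_mP_zero {Z : Set X} (hZ : Z.Nonempty) {s : ℝ} (hs : s ≤ 0) (N : ℕ) (δ : ℝ) :
    1 ≤ mP F (fun _ => 0) Z s N δ := by
  refine le_iInf₂ fun E hE => ?_
  obtain ⟨p, hp, -⟩ := mem_iUnion₂.mp (hE.2.2 hZ.some_mem)
  refine le_trans ?_ (ENNReal.le_tsum ⟨p, hp⟩)
  rw [birkhoff_zero, add_zero, ← ENNReal.ofReal_one]
  exact ENNReal.ofReal_le_ofReal <| Real.one_le_exp <|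
    mul_nonneg_of_nonpos_of_nonpos (neg_nonpos.mpr p.2.cast_nonneg) hs

lemma pos_of_mPd_eq_zero {Z : Set X} (hZ : Z.Nonempty) {s δ : ℝ}
    (h : mPd F (fun _ => 0) Z s δ = 0) : 0 < s := by
  by_contra! hs
  have := (one_le_mP_zero F hZ hs 0 δ).trans
    ((le_iSup (fun N => mP F (fun _ => 0) Z s N δ) 0).trans h.le)
  simp at this

lemma hausdorffMeasure_eq_zero_of_mPd_eq_zero [MeasurableSpace X] [BorelSpace X] {θ : ℝ}
    (hθ : 1 < θ) {δ : ℝ}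
    (hδ : ∀ x n, ediam (bowenBall F x n δ) ≤ ENNReal.ofReal (θ ^ (-(n : ℝ))))
    {Z : Set X} {t : ℝ} (ht : 0 ≤ t) (h : mPd F (fun _ => 0) Z (t * Real.log θ) δ = 0) :
    μH[t] Z = 0 := by
  have hcover : ∀ N : ℕ, ∃ E ∈ pressureCovers F Z N δ,
      ∑' p : E, ENNReal.ofReal (θ ^ (-(p.1.2 : ℝ))) ^ t < (N : ℝ≥0∞)⁻¹ := by
    intro N
    have hN : mP F (fun _ => 0) Z (t * Real.log θ) N δ < (N : ℝ≥0∞)⁻¹ := by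
      rw [nonpos_iff_eq_zero.mp ((le_iSup (fun N => mP F (fun _ => 0) Z _ N δ) N).trans h.le)]
      exact ENNReal.inv_pos.mpr (ENNReal.natCast_ne_top N)
    simpa only [mP, iInf_lt_iff, exists_prop, birkhoff_zero, add_zero,
      ofReal_exp_neg_mul_mul_log (by linarith : 0 < θ)] using hN
  choose E hE hsum using hcover
  have := fun N => (hE N).1.to_subtype
  refine le_antisymm ?_ bot_le
  calc μH[t] Z
      ≤ liminf (fun N => ∑' p : E N, ediam (bowenBall F p.1.1 p.1.2 δ) ^ t) atTop :=
        Measure.hausdorffMeasure_le_liminf_tsum (ι := fun N => E N) (l := atTop) t Z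
          (fun N : ℕ => ENNReal.ofReal (θ ^ (-(N : ℝ)))) (tendsto_ofReal_rpow_neg_natCast hθ)
          (fun N p => bowenBall F p.1.1 p.1.2 δ)
          (.of_forall fun N p => (hδ _ _).trans <| ENNReal.ofReal_le_ofReal <|
            Real.rpow_le_rpow_of_exponent_le hθ.le <| by
              simpa using ((hE N).2.1 p p.2).2)
          (.of_forall fun N => by simpa only [biUnion_eq_iUnion] using (hE N).2.2)
    _ ≤ liminf (fun N : ℕ => (N : ℝ≥0∞)⁻¹) atTop :=
        liminf_le_liminf (.of_forall fun N => (ENNReal.tsum_le_tsum fun p =>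
          ENNReal.rpow_le_rpow (hδ _ _) ht).trans (hsum N).le)
    _ = 0 := ENNReal.tendsto_inv_nat_nhds_zero.liminf_eq

lemma mP_le_tsum_of_subset_closedBall {ι : Type*} [Countable ι] {θ : ℝ} (hθ : 0 < θ) {δ : ℝ}
    {c : ℕ} (hc : ∀ x n, closedBall x (θ ^ (-((n + c : ℕ) : ℝ))) ⊆ bowenBall F x n δ)
    {Z : Set X} {N : ℕ} {C : ι → Set X} (hZC : Z ⊆ ⋃ i, C i) {x : ι → X} (hxZ : ∀ i, x i ∈ Z)
    {l : ι → ℕ} (hl : ∀ i, N + c ≤ l i) (hCl : ∀ i, C i ⊆ closedBall (x i) (θ ^ (-(l i : ℝ))))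
    {t : ℝ} (ht : 0 ≤ t) :
    mP F (fun _ => 0) Z (t * Real.log θ) N δ ≤
      ENNReal.ofReal (θ ^ (c : ℝ)) ^ t * ∑' i, ENNReal.ofReal (θ ^ (-(l i : ℝ))) ^ t := by
  set g : ι → X × ℕ := fun i => (x i, l i - c)
  have hE : range g ∈ pressureCovers F Z N δ := by
    refine ⟨countable_range g, ?_, fun z hz => ?_⟩
    · rintro _ ⟨i, rfl⟩
      exact ⟨hxZ i, by have := hl i; simp only [g]; omega⟩
    · obtain ⟨i, hzi⟩ := mem_iUnion.mp (hZC hz)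
      refine mem_iUnion₂.mpr ⟨g i, mem_range_self i, hc _ _ ?_⟩
      rw [Nat.sub_add_cancel (by have := hl i; omega)]
      exact hCl i hzi
  calc mP F (fun _ => 0) Z (t * Real.log θ) N δ
      ≤ ∑' p : range g, ENNReal.ofReal (Real.exp (-(p.1.2 : ℝ) * (t * Real.log θ) +
          birkhoff F (fun _ => 0) p.1.2 p.1.1)) := iInf₂_le _ hE
    _ ≤ ∑' i, ENNReal.ofReal (θ ^ (-((l i - c : ℕ) : ℝ))) ^ t := by
        refine (ENNReal.tsum_le_tsum_comp_of_surjective rangeFactorization_surjective _).trans ?_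
        simp only [rangeFactorization, birkhoff_zero, add_zero,
          ofReal_exp_neg_mul_mul_log hθ, g, le_refl]
    _ = ENNReal.ofReal (θ ^ (c : ℝ)) ^ t * ∑' i, ENNReal.ofReal (θ ^ (-(l i : ℝ))) ^ t := by
        rw [← ENNReal.tsum_mul_left]
        refine tsum_congr fun i => ?_
        rw [rpow_neg_natCast_sub hθ (by have := hl i; omega),
          ENNReal.ofReal_mul (by positivity), ENNReal.mul_rpow_of_nonneg _ _ ht]

lemma mP_le_of_cover {θ : ℝ} (hθ : 1 < θ) {δ : ℝ} {c : ℕ}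
    (hc : ∀ x n, closedBall x (θ ^ (-((n + c : ℕ) : ℝ))) ⊆ bowenBall F x n δ)
    {Z : Set X} {N : ℕ} {C : ℕ → Set X} (hZC : Z ⊆ ⋃ n, C n)
    (hCdiam : ∀ n, ediam (C n) ≤ ENNReal.ofReal (θ ^ (-((N + c : ℕ) : ℝ))))
    {t : ℝ} (ht : 0 < t) {η : ℕ → ℝ≥0∞} (hη : ∀ n, η n ≠ 0) :
    mP F (fun _ => 0) Z (t * Real.log θ) N δ ≤
      ENNReal.ofReal (θ ^ (c : ℝ)) ^ t * ENNReal.ofReal θ ^ t *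
        (∑' n, ediam (C n) ^ t + ∑' n, η n) := by
  set I := {n | (C n ∩ Z).Nonempty}
  have hcenter : ∀ n : I, ∃ x ∈ Z, ∃ l, N + c ≤ l ∧ C n ⊆ closedBall x (θ ^ (-(l : ℝ))) ∧
      ENNReal.ofReal (θ ^ (-(l : ℝ))) ^ t ≤ ENNReal.ofReal θ ^ t * (ediam (C n) ^ t + η n) :=
    fun n =>
      let ⟨x, hxC, hxZ⟩ := n.2
      ⟨x, hxZ, exists_subset_closedBall_of_ediam_le hθ hxC (hCdiam n) ht (hη n)⟩
  choose x hxZ l hl hCl hweight using hcenter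
  have hZI : Z ⊆ ⋃ n : I, C n := fun z hz =>
    let ⟨n, hzn⟩ := mem_iUnion.mp (hZC hz)
    mem_iUnion.mpr ⟨⟨n, z, hzn, hz⟩, hzn⟩
  calc mP F (fun _ => 0) Z (t * Real.log θ) N δ
      ≤ ENNReal.ofReal (θ ^ (c : ℝ)) ^ t * ∑' n : I, ENNReal.ofReal (θ ^ (-(l n : ℝ))) ^ t :=
        mP_le_tsum_of_subset_closedBall F (by linarith) hc hZI hxZ hl hCl ht.le
    _ ≤ ENNReal.ofReal (θ ^ (c : ℝ)) ^ t *
          ∑' n : I, ENNReal.ofReal θ ^ t * (ediam (C n) ^ t + η n) := by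
        gcongr with n
        exact hweight n
    _ ≤ ENNReal.ofReal (θ ^ (c : ℝ)) ^ t *
          ∑' n, ENNReal.ofReal θ ^ t * (ediam (C n) ^ t + η n) := by
        gcongr
        exact ENNReal.tsum_comp_le_tsum_of_injective Subtype.val_injective
          (fun n => ENNReal.ofReal θ ^ t * (ediam (C n) ^ t + η n))
    _ = _ := by rw [ENNReal.tsum_mul_left, ENNReal.tsum_add, mul_assoc]

lemma mPd_eq_zero_of_hausdorffMeasure_eq_zero [MeasurableSpace X] [BorelSpace X] {θ : ℝ}
    (hθ : 1 < θ) {δ : ℝ} {c : ℕ}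
    (hc : ∀ x n, closedBall x (θ ^ (-((n + c : ℕ) : ℝ))) ⊆ bowenBall F x n δ)
    {Z : Set X} {t : ℝ} (ht : 0 < t) (h : μH[t] Z = 0) :
    mPd F (fun _ => 0) Z (t * Real.log θ) δ = 0 := by
  refine le_antisymm (iSup_le fun N => ENNReal.le_of_forall_pos_le_add fun ε hε _ => ?_) bot_le
  set K := ENNReal.ofReal (θ ^ (c : ℝ)) ^ t * ENNReal.ofReal θ ^ t
  have hK : K ≠ ⊤ := ENNReal.mul_ne_top (ENNReal.rpow_ne_top_of_nonneg ht.le ENNReal.ofReal_ne_top)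
    (ENNReal.rpow_ne_top_of_nonneg ht.le ENNReal.ofReal_ne_top)
  have hε' : (ε : ℝ≥0∞) / K / 2 ≠ 0 := by simp [hK, hε.ne']
  obtain ⟨C, hZC, hCdiam, hCsum⟩ := exists_cover_of_hausdorffMeasure_eq_zero ht h
    (ENNReal.ofReal_pos.mpr (Real.rpow_pos_of_pos (by linarith : 0 < θ)
      (-((N + c : ℕ) : ℝ)))) (pos_iff_ne_zero.mpr hε')
  obtain ⟨η, hη, hηsum⟩ := ENNReal.exists_pos_sum_of_countable' hε' ℕ
  calc mP F (fun _ => 0) Z (t * Real.log θ) N δ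
      ≤ K * (∑' n, ediam (C n) ^ t + ∑' n, η n) :=
        mP_le_of_cover F hθ hc hZC hCdiam ht fun n => (hη n).ne'
    _ ≤ K * (ε / K / 2 + ε / K / 2) := by gcongr
    _ ≤ 0 + ε := by rw [ENNReal.add_halves, zero_add]; exact ENNReal.mul_div_le

lemma mPd_eq_zero_of_dimH_lt [MeasurableSpace X] [BorelSpace X] {θ : ℝ} (hθ : 1 < θ)
    {δ : ℝ} {c : ℕ} (hc : ∀ x n, closedBall x (θ ^ (-((n + c : ℕ) : ℝ))) ⊆ bowenBall F x n δ)
    {Z : Set X} {s : ℝ} (hs : dimH Z < ENNReal.ofReal (s / Real.log θ)) :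
    mPd F (fun _ => 0) Z s δ = 0 := by
  have ht : 0 < s / Real.log θ := ENNReal.ofReal_pos.mp (pos_of_gt hs)
  have hμ : μH[s / Real.log θ] Z = 0 := by
    simpa [Real.coe_toNNReal _ ht.le] using
      hausdorffMeasure_of_dimH_lt (d := (s / Real.log θ).toNNReal) hs
  simpa [div_mul_cancel₀ s (Real.log_pos hθ).ne'] using
    mPd_eq_zero_of_hausdorffMeasure_eq_zero F hθ hc ht hμ

lemma dimH_le_of_mPd_eq_zero [MeasurableSpace X] [BorelSpace X] {θ : ℝ} (hθ : 1 < θ) {δ : ℝ}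
    (hδ : ∀ x n, ediam (bowenBall F x n δ) ≤ ENNReal.ofReal (θ ^ (-(n : ℝ))))
    {Z : Set X} (hZ : Z.Nonempty) {s : ℝ} (h : mPd F (fun _ => 0) Z s δ = 0) :
    dimH Z ≤ ENNReal.ofReal (s / Real.log θ) := by
  have ht : 0 ≤ s / Real.log θ := (div_pos (pos_of_mPd_eq_zero F hZ h) (Real.log_pos hθ)).le
  rw [← div_mul_cancel₀ s (Real.log_pos hθ).ne'] at h
  refine dimH_le_of_hausdorffMeasure_ne_top (d := (s / Real.log θ).toNNReal) ?_
  simp [Real.coe_toNNReal _ ht, hausdorffMeasure_eq_zero_of_mPd_eq_zero F hθ hδ ht h]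

theorem dimH_eq_pres_div_log {θ : ℝ} (hθ : 1 < θ)
    (hexp : ∀ δ > 0, ∃ c : ℕ, ∀ x n, closedBall x (θ ^ (-((n + c : ℕ) : ℝ))) ⊆ bowenBall F x n δ)
    {δ₀ : ℝ} (hδ₀ : 0 < δ₀)
    (hdiam : ∀ x n, ediam (bowenBall F x n δ₀) ≤ ENNReal.ofReal (θ ^ (-(n : ℝ))))
    (hfin : dimH (univ : Set X) ≠ ⊤) (Z : Set X) :
    dimH Z = ENNReal.ofReal (pres F (fun _ => 0) Z / Real.log θ) := by
  rcases Z.eq_empty_or_nonempty with rfl | hZ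
  · simp [pres_empty]
  borelize X
  have hL : 0 < Real.log θ := Real.log_pos hθ
  set a := Real.log θ * (dimH Z).toReal
  have ha : 0 ≤ a := mul_nonneg hL.le ENNReal.toReal_nonneg
  have hdimH : dimH Z = ENNReal.ofReal (a / Real.log θ) := by
    rw [mul_div_cancel_left₀ _ hL.ne', ENNReal.ofReal_toReal
      (ne_top_of_le_ne_top hfin (dimH_mono (subset_univ Z)))]
  -- `presd F 0 Z δ` is the infimum of `{s | mPd … = 0}`, which contains `Ioi a` for every `δ > 0`
  -- and lies in `Ici a` for `δ = δ₀`
  have hIoi : ∀ δ > 0, Ioi a ⊆ {s | mPd F (fun _ => 0) Z s δ = 0} := fun δ hδ s hs => by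
    obtain ⟨c, hc⟩ := hexp δ hδ
    refine mPd_eq_zero_of_dimH_lt F hθ hc ?_
    rw [hdimH, ENNReal.ofReal_lt_ofReal_iff (div_pos (ha.trans_lt hs) hL)]
    exact div_lt_div_of_pos_right hs hL
  have hIci : {s | mPd F (fun _ => 0) Z s δ₀ = 0} ⊆ Ici a := fun s hs => by
    have hs' := dimH_le_of_mPd_eq_zero F hθ hdiam hZ hs
    rw [hdimH, ENNReal.ofReal_le_ofReal_iff (div_pos (pos_of_mPd_eq_zero F hZ hs) hL).le] at hs'
    exact (div_le_div_iff_of_pos_right hL).mp hs'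
  have hpresd : ∀ δ : {d : ℝ // 0 < d}, presd F (fun _ => 0) Z δ ≤ a := fun δ =>
    (csInf_le_csInf ⟨0, fun s hs => (pos_of_mPd_eq_zero F hZ hs).le⟩ nonempty_Ioi
      (hIoi δ δ.2)).trans csInf_Ioi.le
  have hpresd₀ : presd F (fun _ => 0) Z δ₀ = a :=
    (isGLB_Ioi.of_subset_of_superset isGLB_Ici (hIoi δ₀ hδ₀) hIci).csInf_eq
      (nonempty_Ioi.mono (hIoi δ₀ hδ₀))
  have hpres : pres F (fun _ => 0) Z = a :=
    le_antisymm (ciSup_le hpresd)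
      (le_ciSup_of_le ⟨a, forall_mem_range.mpr hpresd⟩ ⟨δ₀, hδ₀⟩ hpresd₀.ge)
  rw [hpres, hdimH]

end Pressure

lemma shiftMap_iterate_apply {k : ℕ} (j : ℕ) (x : ℕ → Fin k) (i : ℕ) :
    shiftMap^[j] x i = x (i + j) := by
  induction j generalizing x with
  | zero => rfl
  | succ j ih => rw [Function.iterate_succ_apply, ih]; rfl

section ShiftSpace

variable {k : ℕ} [MetricSpace (ℕ → Fin k)] {θ : ℝ}
  (hdist : ∀ x y : ℕ → Fin k, dist x y = shiftDist (fun w => θ ^ (-(w.length : ℝ))) x y)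

include hdist

lemma dist_eq_rpow_find {x y : ℕ → Fin k} (h : x ≠ y) :
    dist x y = θ ^ (-(Nat.find (Function.ne_iff.mp h) : ℝ)) := by
  rw [hdist, shiftDist, dif_neg h, List.length_ofFn]

lemma dist_le_rpow_iff (hθ : 1 < θ) (x y : ℕ → Fin k) (l : ℕ) :
    dist x y ≤ θ ^ (-(l : ℝ)) ↔ ∀ i < l, x i = y i := by
  by_cases h : x = y
  · subst h
    simp only [dist_self, implies_true, iff_true]
    positivity
  · rw [dist_eq_rpow_find hdist h, Real.rpow_le_rpow_left_iff hθ, neg_le_neg_iff, Nat.cast_le,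
      Nat.le_find_iff]
    simp

lemma head_eq_of_dist_lt_one {x y : ℕ → Fin k} (hxy : dist x y < 1) : x 0 = y 0 := by
  by_contra h0
  have hne : x ≠ y := fun h => h0 (congrFun h 0)
  rw [dist_eq_rpow_find hdist hne, (Nat.find_eq_zero _).mpr h0] at hxy
  simp at hxy

lemma closedBall_subset_bowenBall_shiftMap (hθ : 1 < θ) {δ : ℝ} {c : ℕ} (hc : θ ^ (-(c : ℝ)) < δ)
    (x : ℕ → Fin k) (n : ℕ) :
    closedBall x (θ ^ (-((n + c : ℕ) : ℝ))) ⊆ bowenBall shiftMap x n δ := by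
  intro y hy j hj
  rw [mem_closedBall, dist_le_rpow_iff hdist hθ] at hy
  refine lt_of_le_of_lt ((dist_le_rpow_iff hdist hθ _ _ c).mpr fun i hi => ?_) hc
  rw [shiftMap_iterate_apply, shiftMap_iterate_apply]
  exact hy _ (by omega)

lemma ediam_bowenBall_shiftMap_le (hθ : 1 < θ) (x : ℕ → Fin k) (n : ℕ) :
    ediam (bowenBall shiftMap x n 1) ≤ ENNReal.ofReal (θ ^ (-(n : ℝ))) := by
  have hprefix : ∀ y ∈ bowenBall shiftMap x n 1, ∀ i < n, y i = x i := fun y hy i hi => by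
    simpa [shiftMap_iterate_apply] using head_eq_of_dist_lt_one hdist (hy i hi.le)
  refine ediam_le fun y hy z hz => ?_
  rw [edist_le_ofReal (Real.rpow_nonneg (by linarith) _), dist_le_rpow_iff hdist hθ]
  intro i hi
  rw [hprefix y hy i hi, hprefix z hz i hi]

lemma dimH_univ_le (hθ : 1 < θ) (hk : 0 < k) :
    dimH (univ : Set (ℕ → Fin k)) ≤ ENNReal.ofReal (Real.logb θ k) := by
  refine dimH_le_logb_of_covers hθ hk (fun n => by simp)
    (fun n (w : Fin n → Fin k) => {y | ∀ i : Fin n, y i = w i}) (fun n w => ?_)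
    (fun n y _ => mem_iUnion.mpr ⟨fun i => y i, fun i => rfl⟩)
  refine ediam_le fun y hy z hz => ?_
  rw [edist_le_ofReal (Real.rpow_nonneg (by linarith) _), dist_le_rpow_iff hdist hθ]
  intro i hi
  rw [hy ⟨i, hi⟩, hz ⟨i, hi⟩]

end ShiftSpace

end BowenNonuniform

theorem stmt16 (k : ℕ) (hk : 2 ≤ k) (θ : ℝ) (hθ : 1 < θ)
    [m : MetricSpace (ℕ → Fin k)]
    (hdist : ∀ x y : ℕ → Fin k,
      dist x y = shiftDist (fun w => θ ^ (-(w.length : ℝ))) x y) :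
    ∀ Z : Set (ℕ → Fin k),
      dimH Z = ENNReal.ofReal
        (pres (shiftMap (k := k)) (fun _ => (0 : ℝ)) Z / Real.log θ) := by
  refine dimH_eq_pres_div_log shiftMap hθ (fun δ hδ => ?_) one_pos
    (ediam_bowenBall_shiftMap_le hdist hθ)
    (ne_top_of_le_ne_top ENNReal.ofReal_ne_top (dimH_univ_le hdist hθ (by omega)))
  obtain ⟨c, hc⟩ := ((tendsto_rpow_neg_natCast hθ).eventually_lt_const hδ).exists
  exact ⟨c, closedBall_subset_bowenBall_shiftMap hdist hθ hc⟩
end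
end
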